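/- Suppose E[κ_X(X,X)] < ∞, E[κ_Y(Y,Y)] < ∞, E[κ_Z(Z,Z)] < ∞, and that for every g ∈ G_X the function z ↦ E[g(X)|Z=z] has a version in G_Z, and for every g ∈ G_Y the function z ↦ E[g(Y)|Z=z] has a version in G_Z. Then for every f ∈ G_X and g ∈ G_Y, ⟨f, Σ_{XY|Z} g⟩_{G_X} = E{ Cov[f(X), g(Y) | Z] }, where Cov[f(X),g(Y)|Z] = E[f(X)g(Y)|Z] − E[f(X)|Z]·E[g(Y)|Z]. -/

import Mathlib

/-!
# Statement 5

Under the moment and conditional-expectation assumptions, for every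
`f ∈ G_X` and `g ∈ G_Y`,
`⟪f, Σ_{XY|Z} g⟫ = E{ Cov[f(X), g(Y) | Z] }`, where
`Cov[f(X),g(Y)|Z] = E[f(X)g(Y)|Z] − E[f(X)|Z]·E[g(Y)|Z]` and
`Σ_{XY|Z} = Σ_XY − Σ_XZ Σ_ZZ^† Σ_ZY`.
-/

open MeasureTheory ProbabilityTheory Filter
open scoped RealInnerProductSpace

noncomputable section

/-- The rank-one operator `u ⊗ v : H₂ → H₁`, `w ↦ ⟪v, w⟫ u`. -/
def rankOne {H1 H2 : Type*} [NormedAddCommGroup H1] [InnerProductSpace ℝ H1]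
    [NormedAddCommGroup H2] [InnerProductSpace ℝ H2] (u : H1) (v : H2) : H2 →L[ℝ] H1 :=
  (innerSL ℝ v).smulRight u

variable {Ω : Type*} [MeasurableSpace Ω]

/-- The mean element `μ = E[k(·,X)] ∈ G` (Bochner integral). -/
def meanElem {H G : Type*} [NormedAddCommGroup G] [InnerProductSpace ℝ G] [CompleteSpace G]
    (P : Measure Ω) (k : H → G) (X : Ω → H) : G :=
  ∫ ω, k (X ω) ∂P

/-- The centered kernel section `κ̃(·,x) = κ(·,x) − μ`. -/
def ctrKer {H G : Type*} [NormedAddCommGroup G] [InnerProductSpace ℝ G] [CompleteSpace G]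
    (P : Measure Ω) (k : H → G) (X : Ω → H) (x : H) : G :=
  k x - meanElem P k X

/-- The (cross-)covariance operator `Σ_{XZ} = E[κ̃_X(·,X) ⊗ κ̃_Z(·,Z)] : G₂ → G₁`. -/
def crossCov {H1 G1 H2 G2 : Type*}
    [NormedAddCommGroup G1] [InnerProductSpace ℝ G1] [CompleteSpace G1]
    [NormedAddCommGroup G2] [InnerProductSpace ℝ G2] [CompleteSpace G2]
    (P : Measure Ω) (k1 : H1 → G1) (X : Ω → H1) (k2 : H2 → G2) (Z : Ω → H2) :
    G2 →L[ℝ] G1 :=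
  ∫ ω, rankOne (ctrKer P k1 X (X ω)) (ctrKer P k2 Z (Z ω)) ∂P

/-- The Penrose axioms characterizing the Moore–Penrose inverse `dag` of a
self-adjoint operator `C`. -/
def IsMoorePenroseInv {G : Type*} [NormedAddCommGroup G] [InnerProductSpace ℝ G]
    (C : G →L[ℝ] G) (dag : G →ₗ[ℝ] G) : Prop :=
  (∀ f, C (dag (C f)) = C f) ∧ (∀ f, dag (C (dag f)) = dag f) ∧
    (∀ f g, ⟪C (dag f), g⟫ = ⟪f, C (dag g)⟫) ∧
    (∀ f g, ⟪dag (C f), g⟫ = ⟪f, dag (C g)⟫)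

/-! Each inner product `⟪f, Σ₁₂ g⟫` is the covariance of `f(X)` and `g(Y)`. If `h_g ∈ G_Z`
represents `E[g(Y)|Z]`, then `g(Y)` and `h_g(Z)` have the same covariance with every
`Z`-measurable square-integrable variable; hence `Σ_ZY g = Σ_ZZ h_g` and
`⟪f, Σ_XZ w⟫ = ⟪h_f, Σ_ZZ w⟫`. The Penrose identity `Σ_ZZ Σ_ZZ^† Σ_ZZ = Σ_ZZ` then turns the
left side into `Cov(f(X), g(Y)) − Cov(h_f(Z), h_g(Z))`, and the law of total covariance
identifies this with the right side. -/

section Covariance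

-- A fresh `Ω`, so that its ambient σ-algebra can be named `mΩ`.
variable {Ω : Type*} {m mΩ : MeasurableSpace Ω} {P : Measure Ω} {X X' Y Y' : Ω → ℝ}

lemma covariance_congr (hX : X =ᵐ[P] X') (hY : Y =ᵐ[P] Y') : cov[X, Y; P] = cov[X', Y'; P] := by
  rw [covariance, covariance, integral_congr_ae hX, integral_congr_ae hY]
  refine integral_congr_ae ?_
  filter_upwards [hX, hY] with ω hXω hYω
  rw [hXω, hYω]

variable [IsProbabilityMeasure P]

lemma covariance_condExp_right (hm : m ≤ mΩ) (hX : StronglyMeasurable[m] X)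
    (hX2 : MemLp X 2 P) (hY : MemLp Y 2 P) : cov[X, P[Y|m]; P] = cov[X, Y; P] := by
  have hXY : Integrable (X * Y) P := hX2.integrable_mul hY
  have hpull : P[X * Y|m] =ᵐ[P] X * P[Y|m] :=
    condExp_mul_of_stronglyMeasurable_left hX hXY (hY.integrable one_le_two)
  rw [covariance_eq_sub hX2 (hY.condExp one_le_two), covariance_eq_sub hX2 hY,
    ← integral_congr_ae hpull, integral_condExp hm, integral_condExp hm]

lemma integral_condExp_mul_sub_mul_condExp (hm : m ≤ mΩ)
    (hX : MemLp X 2 P) (hY : MemLp Y 2 P) :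
    ∫ ω, (P[fun ω' => X ω' * Y ω'|m] ω - P[X|m] ω * P[Y|m] ω) ∂P
      = cov[X, Y; P] - cov[P[X|m], P[Y|m]; P] := by
  have hX' : MemLp (P[X|m]) 2 P := hX.condExp one_le_two
  have hY' : MemLp (P[Y|m]) 2 P := hY.condExp one_le_two
  have hXY' : Integrable (fun ω => P[X|m] ω * P[Y|m] ω) P := hX'.integrable_mul hY'
  rw [integral_sub integrable_condExp hXY', integral_condExp hm,
    covariance_eq_sub hX hY, covariance_eq_sub hX' hY', integral_condExp hm, integral_condExp hm]
  simp only [Pi.mul_apply]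
  ring

end Covariance

section RankOne

variable {H1 H2 : Type*} [NormedAddCommGroup H1] [InnerProductSpace ℝ H1]
  [NormedAddCommGroup H2] [InnerProductSpace ℝ H2]

@[simp]
lemma rankOne_apply (u : H1) (v : H2) (w : H2) : rankOne u v w = ⟪v, w⟫ • u := rfl

lemma norm_rankOne (u : H1) (v : H2) : ‖rankOne u v‖ = ‖v‖ * ‖u‖ := by
  rw [rankOne, ContinuousLinearMap.norm_smulRight_apply, innerSL_apply_norm]

lemma continuous_rankOne : Continuous fun p : H1 × H2 => rankOne p.1 p.2 := by
  unfold rankOne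
  fun_prop

lemma integrable_rankOne {P : Measure Ω} {u : Ω → H1} {v : Ω → H2}
    (hu : MemLp u 2 P) (hv : MemLp v 2 P) :
    Integrable (fun ω => rankOne (u ω) (v ω)) P := by
  refine Integrable.mono' (hv.norm.integrable_mul hu.norm)
    (continuous_rankOne.comp_aestronglyMeasurable
      (hu.aestronglyMeasurable.prodMk hv.aestronglyMeasurable))
    (.of_forall fun _ => (norm_rankOne _ _).le)

end RankOne

lemma memLp_two_of_integrable_inner_self {G : Type*} [NormedAddCommGroup G]
    [InnerProductSpace ℝ G] {P : Measure Ω} {u : Ω → G} (hu : AEStronglyMeasurable u P)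
    (hint : Integrable (fun ω => ⟪u ω, u ω⟫) P) : MemLp u 2 P := by
  rw [memLp_two_iff_integrable_sq_norm hu]
  simpa only [real_inner_self_eq_norm_sq] using hint

lemma inner_ctrKer {H G : Type*} [NormedAddCommGroup G] [InnerProductSpace ℝ G]
    [CompleteSpace G] {P : Measure Ω} {k : H → G} {X : Ω → H}
    (hX : Integrable (fun ω => k (X ω)) P) (x : H) (f : G) :
    ⟪ctrKer P k X x, f⟫ = ⟪k x, f⟫ - P[fun ω => ⟪k (X ω), f⟫] := by
  rw [ctrKer, meanElem, inner_sub_left, real_inner_comm f (∫ ω, k (X ω) ∂P),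
    ← integral_inner hX]
  simp only [real_inner_comm f]

lemma inner_crossCov_eq_covariance {H1 G1 H2 G2 : Type*}
    [NormedAddCommGroup G1] [InnerProductSpace ℝ G1] [CompleteSpace G1]
    [NormedAddCommGroup G2] [InnerProductSpace ℝ G2] [CompleteSpace G2]
    {P : Measure Ω} [IsFiniteMeasure P]
    {k1 : H1 → G1} {X : Ω → H1} {k2 : H2 → G2} {Y : Ω → H2}
    (h1 : MemLp (fun ω => k1 (X ω)) 2 P) (h2 : MemLp (fun ω => k2 (Y ω)) 2 P)
    (f : G1) (g : G2) :
    ⟪f, crossCov P k1 X k2 Y g⟫ = cov[fun ω => ⟪k1 (X ω), f⟫, fun ω => ⟪k2 (Y ω), g⟫; P] := by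
  have hF : Integrable (fun ω => rankOne (ctrKer P k1 X (X ω)) (ctrKer P k2 Y (Y ω))) P :=
    integrable_rankOne (h1.sub (memLp_const _)) (h2.sub (memLp_const _))
  rw [crossCov, ContinuousLinearMap.integral_apply hF,
    ← integral_inner (hF.apply_continuousLinearMap g), covariance]
  refine integral_congr_ae (.of_forall fun ω => ?_)
  simp only [rankOne_apply, real_inner_smul_left, real_inner_comm _ f,
    inner_ctrKer (h1.integrable one_le_two), inner_ctrKer (h2.integrable one_le_two)]
  ring

lemma covariance_inner_eq_of_condExp {HZ GZ : Type*} [MeasurableSpace HZ]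
    [NormedAddCommGroup GZ] [InnerProductSpace ℝ GZ] [MeasurableSpace GZ] [OpensMeasurableSpace GZ]
    {P : Measure Ω} [IsProbabilityMeasure P] {Z : Ω → HZ} (hZ : Measurable Z)
    {kZ : HZ → GZ} (hkZ : Measurable kZ) (hZ2 : MemLp (fun ω => kZ (Z ω)) 2 P)
    {c : Ω → ℝ} (hc : MemLp c 2 P) {h : GZ}
    (hh : (fun ω => ⟪kZ (Z ω), h⟫) =ᵐ[P] P[c|MeasurableSpace.comap Z inferInstance]) (u : GZ) :
    cov[fun ω => ⟪kZ (Z ω), u⟫, c; P] = cov[fun ω => ⟪kZ (Z ω), u⟫, fun ω => ⟪kZ (Z ω), h⟫; P] := by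
  have hu : StronglyMeasurable[MeasurableSpace.comap Z inferInstance] fun ω => ⟪kZ (Z ω), u⟫ :=
    ((continuous_id.inner continuous_const).measurable.comp
      (hkZ.comp (comap_measurable Z))).stronglyMeasurable
  rw [← covariance_condExp_right hZ.comap_le hu (hZ2.inner_const u) hc]
  exact covariance_congr .rfl hh.symm

theorem statement5_general
    (P : Measure Ω) [IsProbabilityMeasure P]
    {HX HY HZ GX GY GZ : Type*}
    [MeasurableSpace HX]
    [MeasurableSpace HY]
    [MeasurableSpace HZ]
    [NormedAddCommGroup GX] [InnerProductSpace ℝ GX] [CompleteSpace GX]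
    [SecondCountableTopology GX] [MeasurableSpace GX] [BorelSpace GX]
    [NormedAddCommGroup GY] [InnerProductSpace ℝ GY] [CompleteSpace GY]
    [SecondCountableTopology GY] [MeasurableSpace GY] [BorelSpace GY]
    [NormedAddCommGroup GZ] [InnerProductSpace ℝ GZ] [CompleteSpace GZ]
    [SecondCountableTopology GZ] [MeasurableSpace GZ] [BorelSpace GZ]
    (X : Ω → HX) (Y : Ω → HY) (Z : Ω → HZ)
    (hX : Measurable X) (hY : Measurable Y) (hZ : Measurable Z)
    (kX : HX → GX) (kY : HY → GY) (kZ : HZ → GZ)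
    (hkX : Measurable kX) (hkY : Measurable kY) (hkZ : Measurable kZ)
    (hmX : Integrable (fun ω => ⟪kX (X ω), kX (X ω)⟫) P)
    (hmY : Integrable (fun ω => ⟪kY (Y ω), kY (Y ω)⟫) P)
    (hmZ : Integrable (fun ω => ⟪kZ (Z ω), kZ (Z ω)⟫) P)
    (hCEX : ∀ g : GX, ∃ h : GZ,
      (fun ω => ⟪kZ (Z ω), h⟫) =ᵐ[P]
        condExp (MeasurableSpace.comap Z inferInstance) P (fun ω => ⟪kX (X ω), g⟫))
    (hCEY : ∀ g : GY, ∃ h : GZ,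
      (fun ω => ⟪kZ (Z ω), h⟫) =ᵐ[P]
        condExp (MeasurableSpace.comap Z inferInstance) P (fun ω => ⟪kY (Y ω), g⟫))
    (dag : GZ →ₗ[ℝ] GZ)
    (hdag : IsMoorePenroseInv (crossCov P kZ Z kZ Z) dag) :
    -- ⟪f, Σ_{XY|Z} g⟫ = E{Cov[f(X), g(Y) | Z]}
    ∀ (f : GX) (g : GY),
      ⟪f, crossCov P kX X kY Y g - crossCov P kX X kZ Z (dag (crossCov P kZ Z kY Y g))⟫
        = ∫ ω,
            (condExp (MeasurableSpace.comap Z inferInstance) P (fun ω' => ⟪kX (X ω'), f⟫ * ⟪kY (Y ω'), g⟫) ω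
              - condExp (MeasurableSpace.comap Z inferInstance) P (fun ω' => ⟪kX (X ω'), f⟫) ω *
                condExp (MeasurableSpace.comap Z inferInstance) P (fun ω' => ⟪kY (Y ω'), g⟫) ω) ∂P := by
  intro f g
  obtain ⟨rf, hrf⟩ := hCEX f
  obtain ⟨rg, hrg⟩ := hCEY g
  have hX2 : MemLp (fun ω => kX (X ω)) 2 P :=
    memLp_two_of_integrable_inner_self (hkX.comp hX).aestronglyMeasurable hmX
  have hY2 : MemLp (fun ω => kY (Y ω)) 2 P :=
    memLp_two_of_integrable_inner_self (hkY.comp hY).aestronglyMeasurable hmY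
  have hZ2 : MemLp (fun ω => kZ (Z ω)) 2 P :=
    memLp_two_of_integrable_inner_self (hkZ.comp hZ).aestronglyMeasurable hmZ
  have hf2 : MemLp (fun ω => ⟪kX (X ω), f⟫) 2 P := hX2.inner_const f
  have hg2 : MemLp (fun ω => ⟪kY (Y ω), g⟫) 2 P := hY2.inner_const g
  have hZY : crossCov P kZ Z kY Y g = crossCov P kZ Z kZ Z rg := ext_inner_left ℝ fun u => by
    rw [inner_crossCov_eq_covariance hZ2 hY2, inner_crossCov_eq_covariance hZ2 hZ2,
      covariance_inner_eq_of_condExp hZ hkZ hZ2 hg2 hrg]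
  have hXZ (w : GZ) : ⟪f, crossCov P kX X kZ Z w⟫ = ⟪rf, crossCov P kZ Z kZ Z w⟫ := by
    rw [inner_crossCov_eq_covariance hX2 hZ2, inner_crossCov_eq_covariance hZ2 hZ2,
      covariance_comm, covariance_inner_eq_of_condExp hZ hkZ hZ2 hf2 hrf, covariance_comm]
  rw [inner_sub_right, hZY, hXZ, hdag.1, inner_crossCov_eq_covariance hX2 hY2,
    inner_crossCov_eq_covariance hZ2 hZ2, integral_condExp_mul_sub_mul_condExp hZ.comap_le hf2 hg2,
    covariance_congr hrf hrg]

theorem statement5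
    (P : Measure Ω) [IsProbabilityMeasure P]
    {HX HY HZ GX GY GZ : Type*}
    [NormedAddCommGroup HX] [InnerProductSpace ℝ HX] [CompleteSpace HX]
    [SecondCountableTopology HX] [MeasurableSpace HX] [BorelSpace HX]
    [NormedAddCommGroup HY] [InnerProductSpace ℝ HY] [CompleteSpace HY]
    [SecondCountableTopology HY] [MeasurableSpace HY] [BorelSpace HY]
    [NormedAddCommGroup HZ] [InnerProductSpace ℝ HZ] [CompleteSpace HZ]
    [SecondCountableTopology HZ] [MeasurableSpace HZ] [BorelSpace HZ]
    [NormedAddCommGroup GX] [InnerProductSpace ℝ GX] [CompleteSpace GX]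
    [SecondCountableTopology GX] [MeasurableSpace GX] [BorelSpace GX]
    [NormedAddCommGroup GY] [InnerProductSpace ℝ GY] [CompleteSpace GY]
    [SecondCountableTopology GY] [MeasurableSpace GY] [BorelSpace GY]
    [NormedAddCommGroup GZ] [InnerProductSpace ℝ GZ] [CompleteSpace GZ]
    [SecondCountableTopology GZ] [MeasurableSpace GZ] [BorelSpace GZ]
    (X : Ω → HX) (Y : Ω → HY) (Z : Ω → HZ)
    (hX : Measurable X) (hY : Measurable Y) (hZ : Measurable Z)
    (kX : HX → GX) (kY : HY → GY) (kZ : HZ → GZ)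
    (hkX : Measurable kX) (hkY : Measurable kY) (hkZ : Measurable kZ)
    (hdX : (Submodule.span ℝ (Set.range kX)).topologicalClosure = ⊤)
    (hdY : (Submodule.span ℝ (Set.range kY)).topologicalClosure = ⊤)
    (hdZ : (Submodule.span ℝ (Set.range kZ)).topologicalClosure = ⊤)
    (hmX : Integrable (fun ω => ⟪kX (X ω), kX (X ω)⟫) P)
    (hmY : Integrable (fun ω => ⟪kY (Y ω), kY (Y ω)⟫) P)
    (hmZ : Integrable (fun ω => ⟪kZ (Z ω), kZ (Z ω)⟫) P)
    (hCEX : ∀ g : GX, ∃ h : GZ,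
      (fun ω => ⟪kZ (Z ω), h⟫) =ᵐ[P]
        condExp (MeasurableSpace.comap Z inferInstance) P (fun ω => ⟪kX (X ω), g⟫))
    (hCEY : ∀ g : GY, ∃ h : GZ,
      (fun ω => ⟪kZ (Z ω), h⟫) =ᵐ[P]
        condExp (MeasurableSpace.comap Z inferInstance) P (fun ω => ⟪kY (Y ω), g⟫))
    (dag : GZ →ₗ[ℝ] GZ)
    (hdag : IsMoorePenroseInv (crossCov P kZ Z kZ Z) dag) :
    -- ⟪f, Σ_{XY|Z} g⟫ = E{Cov[f(X), g(Y) | Z]}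
    ∀ (f : GX) (g : GY),
      ⟪f, crossCov P kX X kY Y g - crossCov P kX X kZ Z (dag (crossCov P kZ Z kY Y g))⟫
        = ∫ ω,
            (condExp (MeasurableSpace.comap Z inferInstance) P (fun ω' => ⟪kX (X ω'), f⟫ * ⟪kY (Y ω'), g⟫) ω
              - condExp (MeasurableSpace.comap Z inferInstance) P (fun ω' => ⟪kX (X ω'), f⟫) ω *
                condExp (MeasurableSpace.comap Z inferInstance) P (fun ω' => ⟪kY (Y ω'), g⟫) ω) ∂P :=
  statement5_general P X Y Z hX hY hZ kX kY kZ hkX hkY hkZ hmX hmY hmZ hCEX hCEY dag hdag
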